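/- arXiv:2505.00055 — 2 statements merged into one kernel-verified Lean document; each statement's English description precedes it below -/
import Mathlib

section
/- A standard function has at most one fixed point: if $\mathcal{X}: \mathbb{R}^n_{\ge 0} \to \mathbb{R}^n$ satisfies positiveness ($\mathcal{X}(B) > 0$ componentwise), monotonicity ($B' \ge B \Rightarrow \mathcal{X}(B') \ge \mathcal{X}(B)$), and scalability ($x > 1 \Rightarrow x\mathcal{X}(B) > \mathcal{X}(xB)$ componentwise), then $\mathcal{X}$ has at most one fixed point $B^* = \mathcal{X}(B^*)$ in $\mathbb{R}^n_{> 0}$. -/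
lemma stmt_5_aux (n : ℕ) (X : (Fin n → ℝ) → (Fin n → ℝ))
    (hmono : ∀ B B' : Fin n → ℝ, (∀ i, 0 ≤ B i) → (∀ i, 0 ≤ B' i) →
      (∀ i, B i ≤ B' i) → ∀ i, X B i ≤ X B' i)
    (hscale : ∀ x : ℝ, 1 < x → ∀ B : Fin n → ℝ, (∀ i, 0 ≤ B i) →
      ∀ i, X (fun j => x * B j) i < x * X B i)
    (B₁ B₂ : Fin n → ℝ) (h₁ : ∀ i, 0 < B₁ i) (h₂ : ∀ i, 0 < B₂ i)
    (hfix₁ : X B₁ = B₁) (hfix₂ : X B₂ = B₂) : ∀ i, B₂ i ≤ B₁ i := by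
  intro i
  haveI : Nonempty (Fin n) := ⟨i⟩
  have hne : (Finset.univ : Finset (Fin n)).Nonempty := Finset.univ_nonempty
  set c := Finset.univ.sup' hne (fun j => B₂ j / B₁ j) with hc
  obtain ⟨i₀, _, hi₀⟩ := Finset.exists_mem_eq_sup' hne (fun j => B₂ j / B₁ j)
  have hle : ∀ j, B₂ j ≤ c * B₁ j := fun j => by
    have := Finset.le_sup' (fun j => B₂ j / B₁ j) (Finset.mem_univ j)
    have := (div_le_iff₀ (h₁ j)).mp this
    linarith
  by_contra hcon
  push_neg at hcon
  have hc1 : 1 < c := by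
    have := Finset.le_sup' (fun j => B₂ j / B₁ j) (Finset.mem_univ i)
    have h1 : 1 < B₂ i / B₁ i := (one_lt_div (h₁ i)).mpr hcon
    linarith
  have hnn : ∀ j, (0:ℝ) ≤ c * B₁ j := fun j =>
    mul_nonneg (by linarith) (h₁ j).le
  have step1 : B₂ i₀ ≤ X (fun j => c * B₁ j) i₀ := by
    have := hmono B₂ (fun j => c * B₁ j) (fun j => (h₂ j).le) hnn hle i₀
    rwa [hfix₂] at this
  have step2 : X (fun j => c * B₁ j) i₀ < c * X B₁ i₀ :=
    hscale c hc1 B₁ (fun j => (h₁ j).le) i₀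
  rw [hfix₁] at step2
  have heq : c * B₁ i₀ = B₂ i₀ := by
    have : c = B₂ i₀ / B₁ i₀ := hi₀
    rw [this, div_mul_cancel₀ _ (h₁ i₀).ne']
  linarith

/-- A standard function (positive, monotone, scalable on the nonnegative
orthant) has at most one fixed point in the positive orthant. -/
theorem stmt_5 (n : ℕ) (X : (Fin n → ℝ) → (Fin n → ℝ))
    (hpos : ∀ B : Fin n → ℝ, (∀ i, 0 ≤ B i) → ∀ i, 0 < X B i)
    (hmono : ∀ B B' : Fin n → ℝ, (∀ i, 0 ≤ B i) → (∀ i, 0 ≤ B' i) →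
      (∀ i, B i ≤ B' i) → ∀ i, X B i ≤ X B' i)
    (hscale : ∀ x : ℝ, 1 < x → ∀ B : Fin n → ℝ, (∀ i, 0 ≤ B i) →
      ∀ i, X (fun j => x * B j) i < x * X B i)
    (B₁ B₂ : Fin n → ℝ) (h₁ : ∀ i, 0 < B₁ i) (h₂ : ∀ i, 0 < B₂ i)
    (hfix₁ : X B₁ = B₁) (hfix₂ : X B₂ = B₂) : B₁ = B₂ := by
  funext i
  exact le_antisymm (stmt_5_aux n X hmono hscale B₂ B₁ h₂ h₁ hfix₂ hfix₁ i)
    (stmt_5_aux n X hmono hscale B₁ B₂ h₁ h₂ hfix₁ hfix₂ i)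
end

section
/- Define $U(y) = \frac{1}{G + q y}(-A q c y^2 + A q y + E q c y - E q)$ for $y > 0$, where $G = \sum_{l \ne j} q_l y_l > 0$, $A > 0$, $E > 0$, $c > 0$, $q > 0$ are constants. Then the second derivative satisfies $U''(y) = \frac{-2q}{(G + qy)^3}\left[cA G^2 + (Aq + Eqc)G + Eq^2\right] < 0$, so $U$ is strictly concave in $y$. -/
/-!
Dividing the numerator by `G + q y` writes `U` as an affine function plus `k / (G + q y)` with
`k = -(c A G² + (A q + E q c) G + E q²) / q`. The affine part has no curvature, and the second
derivative of `k / (G + q y)` is `2 k q² / (G + q y)³`, which is negative for `y > 0`.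
-/

lemma hasDerivAt_const_add_mul (G q y : ℝ) : HasDerivAt (fun y => G + q * y) q y := by
  simpa using ((hasDerivAt_id y).const_mul q).const_add G

section LinearAddDiv

variable {a b k G q : ℝ}

lemma hasDerivAt_linear_add_div {y : ℝ} (hy : G + q * y ≠ 0) :
    HasDerivAt (fun y => a * y + b + k / (G + q * y)) (a - k * q / (G + q * y) ^ 2) y := by
  have hden := hasDerivAt_const_add_mul G q y
  refine ((((hasDerivAt_id y).const_mul a).add_const b).add
    ((hasDerivAt_const y k).div hden hy)).congr_deriv ?_
  field_simp
  ring

lemma deriv_deriv_linear_add_div {y : ℝ} (hy : G + q * y ≠ 0) :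
    deriv (deriv fun y => a * y + b + k / (G + q * y)) y = 2 * k * q ^ 2 / (G + q * y) ^ 3 := by
  have hden := hasDerivAt_const_add_mul G q y
  have hderiv : deriv (fun y => a * y + b + k / (G + q * y))
      =ᶠ[nhds y] fun y => a - k * q / (G + q * y) ^ 2 :=
    (hden.continuousAt.eventually_ne hy).mono fun z hz =>
      (hasDerivAt_linear_add_div hz).deriv
  rw [hderiv.deriv_eq]
  have hderiv' : HasDerivAt (fun y => a - k * q / (G + q * y) ^ 2)
      (2 * k * q ^ 2 / (G + q * y) ^ 3) y := by
    refine ((hasDerivAt_const y a).sub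
      ((hasDerivAt_const y (k * q)).div (hden.pow 2) (pow_ne_zero 2 hy))).congr_deriv ?_
    simp only [Pi.pow_apply]
    field_simp
    ring
  exact hderiv'.deriv

end LinearAddDiv

lemma one_div_mul_quadratic_eq_linear_add_div {G A E c q y : ℝ} (hq : q ≠ 0)
    (hy : G + q * y ≠ 0) :
    (1 / (G + q * y)) * (-A * q * c * y ^ 2 + A * q * y + E * q * c * y - E * q)
      = -A * c * y + (A + E * c + A * c * G / q)
        + -(c * A * G ^ 2 + (A * q + E * q * c) * G + E * q ^ 2) / q / (G + q * y) := by
  field_simp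
  ring

lemma deriv_deriv_one_div_mul_quadratic {G A E c q y : ℝ} (hq : q ≠ 0)
    (hy : G + q * y ≠ 0) :
    deriv (deriv fun y : ℝ =>
        (1 / (G + q * y)) * (-A * q * c * y ^ 2 + A * q * y + E * q * c * y - E * q)) y
      = -2 * q / (G + q * y) ^ 3 * (c * A * G ^ 2 + (A * q + E * q * c) * G + E * q ^ 2) := by
  have hden : Continuous fun y : ℝ => G + q * y := by fun_prop
  have heq : (fun y : ℝ =>
        (1 / (G + q * y)) * (-A * q * c * y ^ 2 + A * q * y + E * q * c * y - E * q))
      =ᶠ[nhds y] fun y => -A * c * y + (A + E * c + A * c * G / q)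
        + -(c * A * G ^ 2 + (A * q + E * q * c) * G + E * q ^ 2) / q / (G + q * y) :=
    (hden.continuousAt.eventually_ne hy).mono fun z hz => one_div_mul_quadratic_eq_linear_add_div (A := A) (E := E) (c := c) hq hz
  rw [heq.deriv.deriv_eq, deriv_deriv_linear_add_div hy]
  field_simp

/-- For `U(y) = (−Aqc y² + Aq y + Eqc y − Eq)/(G + q y)` with
`G, A, E, c, q > 0`, the second derivative equals
`−2q/(G+qy)³ [cAG² + (Aq+Eqc)G + Eq²] < 0`, so `U` is strictly concave on `y > 0`. -/
theorem stmt_6 (G A E c q : ℝ) (hG : 0 < G) (hA : 0 < A) (hE : 0 < E)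
    (hc : 0 < c) (hq : 0 < q) :
    (∀ y : ℝ, 0 < y →
      deriv (deriv (fun y : ℝ =>
        (1 / (G + q * y)) * (-A * q * c * y ^ 2 + A * q * y + E * q * c * y - E * q))) y
        = -2 * q / (G + q * y) ^ 3 * (c * A * G ^ 2 + (A * q + E * q * c) * G + E * q ^ 2) ∧
      deriv (deriv (fun y : ℝ =>
        (1 / (G + q * y)) * (-A * q * c * y ^ 2 + A * q * y + E * q * c * y - E * q))) y < 0) ∧
    StrictConcaveOn ℝ (Set.Ioi (0 : ℝ))
      (fun y : ℝ =>
        (1 / (G + q * y)) * (-A * q * c * y ^ 2 + A * q * y + E * q * c * y - E * q)) := by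
  have hden : ∀ y ∈ Set.Ioi (0 : ℝ), G + q * y ≠ 0 := fun y (hy : 0 < y) => by positivity
  have hneg : ∀ y ∈ Set.Ioi (0 : ℝ), deriv (deriv (fun y : ℝ =>
      (1 / (G + q * y)) * (-A * q * c * y ^ 2 + A * q * y + E * q * c * y - E * q))) y < 0 := by
    intro y (hy : 0 < y)
    rw [deriv_deriv_one_div_mul_quadratic hq.ne' (hden y hy)]
    have hD : 0 < (G + q * y) ^ 3 := by positivity
    exact mul_neg_of_neg_of_pos (div_neg_of_neg_of_pos (by linarith) hD) (by positivity)
  refine ⟨fun y hy => ⟨deriv_deriv_one_div_mul_quadratic hq.ne' (hden y hy), hneg y hy⟩, ?_⟩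
  refine strictConcaveOn_of_deriv2_neg' (convex_Ioi 0) ?_ fun y hy => by simpa using hneg y hy
  exact (continuousOn_const.div (by fun_prop) hden).mul (by fun_prop)
end
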